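/- Let V = V_l ⊔ V_r with V_l = {v₁,…,v_{⌈n/2⌉}} and V_r = {v_{⌈n/2⌉+1},…,v_n}. There exists a sequence of at most ⌈n/2⌉ clique-flip steps (where each step is either a single clique or two cliques with disjoint vertex supports, one contained in edges incident to v_i's side and one to v_{n−i+1}'s side) after which the residual graph (G XOR all applied cliques) has no edges crossing the cut between V_l and V_r. -/
import Mathlib


/-- Edge set of the complete graph on the vertex subset `S ⊆ Fin n`. -/
def cliqueEdges (n : ℕ) (S : Finset (Fin n)) : Finset (Sym2 (Fin n)) :=
  ((S ×ˢ S).filter fun p => p.1 ≠ p.2).image fun p => s(p.1, p.2)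

lemma mem_cliqueEdges {n : ℕ} {S : Finset (Fin n)} {a b : Fin n} :
    s(a, b) ∈ cliqueEdges n S ↔ a ∈ S ∧ b ∈ S ∧ a ≠ b := by
  simp only [cliqueEdges, Finset.mem_image, Finset.mem_filter, Finset.mem_product]
  constructor
  · rintro ⟨⟨x, y⟩, ⟨⟨hx, hy⟩, hne⟩, h⟩
    rw [Sym2.eq_iff] at h
    rcases h with ⟨h1, h2⟩ | ⟨h1, h2⟩
    · subst h1; subst h2; exact ⟨hx, hy, hne⟩
    · subst h1; subst h2; exact ⟨hy, hx, fun h => hne h.symm⟩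
  · rintro ⟨ha, hb, hne⟩
    exact ⟨(a, b), ⟨⟨ha, hb⟩, hne⟩, rfl⟩

/-- with `V_l = {v : (v : ℕ) < ⌈n/2⌉}` and `V_r` its complement, there is a
sequence of at most `⌈n/2⌉` clique-flip steps, each consisting of (at most) two cliques
with disjoint vertex supports, after which the residual graph has no crossing edges:
every crossing edge lies in `G` iff it is flipped an odd number of times. -/
theorem sever_cut_in_half_n_steps (n : ℕ) (G : Finset (Sym2 (Fin n)))
    (hG : ∀ e ∈ G, ¬ e.IsDiag) :
    ∃ (m : ℕ) (P Q : Fin m → Finset (Fin n)),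
      m ≤ (n + 1) / 2 ∧
      (∀ i, Disjoint (P i) (Q i)) ∧
      ∀ a b : Fin n, (a : ℕ) < (n + 1) / 2 → (n + 1) / 2 ≤ (b : ℕ) →
        (s(a, b) ∈ G ↔
          Odd ((Finset.univ.filter fun i => s(a, b) ∈ cliqueEdges n (P i)).card +
               (Finset.univ.filter fun i => s(a, b) ∈ cliqueEdges n (Q i)).card)) := by
  set m := (n + 1) / 2 with hmdef
  have hm : m ≤ n := by omega
  set P : Fin m → Finset (Fin n) := fun i =>
    insert ⟨(i : ℕ), lt_of_lt_of_le i.2 hm⟩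
      (Finset.univ.filter fun b : Fin n =>
        m ≤ (b : ℕ) ∧ s(⟨(i : ℕ), lt_of_lt_of_le i.2 hm⟩, b) ∈ G) with hPdef
  refine ⟨m, P, fun _ => ∅, le_refl m, fun i => Finset.disjoint_empty_right _, ?_⟩
  intro a b ha hb
  have hQ : (Finset.univ.filter fun i : Fin m =>
      s(a, b) ∈ cliqueEdges n (∅ : Finset (Fin n))).card = 0 := by
    simp [cliqueEdges]
  rw [hQ, Nat.add_zero]
  have hab : a ≠ b := by
    intro h; subst h; omega
  have hmem : ∀ i : Fin m, (s(a, b) ∈ cliqueEdges n (P i)) ↔ ((i : ℕ) = (a : ℕ) ∧ s(a, b) ∈ G) := by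
    intro i
    rw [mem_cliqueEdges]
    constructor
    · rintro ⟨haP, hbP, -⟩
      simp only [hPdef, Finset.mem_insert, Finset.mem_filter, Finset.mem_univ, true_and] at haP hbP
      have hia : (i : ℕ) = (a : ℕ) := by
        rcases haP with h | ⟨h, -⟩
        · exact congrArg Fin.val h.symm
        · omega
      have hai : (⟨(i : ℕ), lt_of_lt_of_le i.2 hm⟩ : Fin n) = a := Fin.ext hia
      rcases hbP with h | ⟨-, h⟩
      · exfalso
        have : (b : ℕ) = (i : ℕ) := congrArg Fin.val h
        omega
      · rw [hai] at h
        exact ⟨hia, h⟩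
    · rintro ⟨hia, hG'⟩
      have hai : (⟨(i : ℕ), lt_of_lt_of_le i.2 hm⟩ : Fin n) = a := Fin.ext hia
      refine ⟨?_, ?_, hab⟩
      · simp only [hPdef, Finset.mem_insert]
        exact Or.inl hai.symm
      · simp only [hPdef, Finset.mem_insert, Finset.mem_filter, Finset.mem_univ, true_and]
        exact Or.inr ⟨hb, by rw [hai]; exact hG'⟩
  by_cases hGab : s(a, b) ∈ G
  · have : (Finset.univ.filter fun i : Fin m => s(a, b) ∈ cliqueEdges n (P i)) =
        {(⟨(a : ℕ), ha⟩ : Fin m)} := by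
      ext i
      simp only [Finset.mem_filter, Finset.mem_univ, true_and, Finset.mem_singleton, hmem i]
      constructor
      · rintro ⟨h, -⟩; exact Fin.ext h
      · rintro rfl; exact ⟨rfl, hGab⟩
    rw [this]
    simp [hGab]
  · have : (Finset.univ.filter fun i : Fin m => s(a, b) ∈ cliqueEdges n (P i)) = ∅ := by
      ext i
      simp only [Finset.mem_filter, Finset.mem_univ, true_and, Finset.notMem_empty, iff_false, hmem i]
      rintro ⟨-, h⟩; exact hGab h
    rw [this]
    simp [hGab]
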